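/- For θ : ℝ → ℝ twice differentiable and ε ∈ ℝ, define at each α ∈ ℝ (whenever the denominators are nonzero) h(θ, ε)(α) = ((1 + θ(α))² + 2 θ'(α)² − (1 + θ(α)) θ''(α)) / ((1 + θ(α))² + θ'(α)²)^{3/2} + ε · ((1 + θ(α)) cos α + θ'(α) sin α) / ( ((1 + θ(α))² + θ'(α)²)^{1/2} · (1 + ε (1 + θ(α)) cos α) ). Then: (i) for every twice differentiable δθ : ℝ → ℝ and every α ∈ ℝ, the map t ↦ h(t·δθ, 0)(α) is differentiable at t = 0 with derivative −δθ(α) − δθ''(α); (ii) for every α ∈ ℝ, the map ε ↦ h(0, ε)(α) is differentiable at ε = 0 with derivative cos α. -/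

import Mathlib

/-!
At `ε = 0` the function `h(θ, 0)` is the curvature of the polar curve `r = 1 + θ`, a smooth
function of the jet `(r, r', r'')` near `(1, 0, 0)`; along the line `θ = t δθ` its linearization is
`-δθ - δθ''`, since `(r² + 2r'² - r r'')` varies by `2δθ - δθ''` and `(r² + r'²)^{3/2}` by `3δθ`.
At `θ = 0` the function reduces to `1 + ε cos α / (1 + ε cos α)`, whose derivative at `0` is `cos α`.
-/

open Real

noncomputable def pulledBackCurvature (θ : ℝ → ℝ) (ε : ℝ) (α : ℝ) : ℝ :=
  ((1 + θ α) ^ 2 + 2 * (deriv θ α) ^ 2 - (1 + θ α) * deriv (deriv θ) α) /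
      (((1 + θ α) ^ 2 + (deriv θ α) ^ 2) ^ ((3:ℝ) / 2)) +
    ε * ((1 + θ α) * Real.cos α + deriv θ α * Real.sin α) /
      ((((1 + θ α) ^ 2 + (deriv θ α) ^ 2) ^ ((1:ℝ) / 2)) *
        (1 + ε * (1 + θ α) * Real.cos α))

/-- Curvature of the polar curve `r(α)` at a point where `(r, r', r'') = (u, v, w)`. -/
noncomputable def polarCurvature (u v w : ℝ) : ℝ :=
  (u ^ 2 + 2 * v ^ 2 - u * w) / (u ^ 2 + v ^ 2) ^ ((3 : ℝ) / 2)

theorem pulledBackCurvature_const_mul_zero (t : ℝ) (f : ℝ → ℝ) (α : ℝ) :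
    pulledBackCurvature (fun x => t * f x) 0 α =
      polarCurvature (1 + t * f α) (t * deriv f α) (t * deriv (deriv f) α) := by
  simp [pulledBackCurvature, polarCurvature, deriv_const_mul_field']

theorem pulledBackCurvature_zero (ε α : ℝ) :
    pulledBackCurvature (fun _ => 0) ε α = 1 + ε * cos α / (1 + ε * cos α) := by
  simp [pulledBackCurvature]

theorem hasDerivAt_polarCurvature_line (a b c : ℝ) :
    HasDerivAt (fun t => polarCurvature (1 + t * a) (t * b) (t * c)) (-a - c) 0 := by
  have hu : HasDerivAt (fun t : ℝ => 1 + t * a) a 0 := (hasDerivAt_mul_const a).const_add 1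
  have hv : HasDerivAt (fun t : ℝ => t * b) b 0 := hasDerivAt_mul_const b
  have hw : HasDerivAt (fun t : ℝ => t * c) c 0 := hasDerivAt_mul_const c
  have hnum : HasDerivAt (fun t => (1 + t * a) ^ 2 + 2 * (t * b) ^ 2 - (1 + t * a) * (t * c))
      (2 * a - c) 0 := by
    refine (((hu.pow 2).add ((hv.pow 2).const_mul 2)).sub (hu.mul hw)).congr_deriv ?_
    norm_num
  have hden : HasDerivAt (fun t => ((1 + t * a) ^ 2 + (t * b) ^ 2) ^ ((3 : ℝ) / 2))
      (3 * a) 0 := by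
    refine (((hu.pow 2).add (hv.pow 2)).rpow_const (p := (3 : ℝ) / 2)
      (by norm_num)).congr_deriv ?_
    norm_num
    ring
  refine (hnum.div hden (by norm_num)).congr_deriv ?_
  norm_num
  ring

theorem hasDerivAt_mul_div_one_add_mul (c : ℝ) :
    HasDerivAt (fun x => x * c / (1 + x * c)) c 0 := by
  have hnum : HasDerivAt (fun x : ℝ => x * c) c 0 := hasDerivAt_mul_const c
  refine (hnum.div (hnum.const_add 1) (by norm_num)).congr_deriv ?_
  norm_num

/-- Derivatives of the pulled-back curvature at `(θ, ε) = (0, 0)`: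
in direction `δθ` the derivative is `−δθ − δθ''`, and in `ε` it is `cos α`. -/
theorem pulledBackCurvature_derivatives :
    (∀ δθ : ℝ → ℝ, Differentiable ℝ δθ → Differentiable ℝ (deriv δθ) →
      ∀ α : ℝ,
        HasDerivAt (fun t : ℝ => pulledBackCurvature (fun x => t * δθ x) 0 α)
          (-(δθ α) - deriv (deriv δθ) α) 0) ∧
    (∀ α : ℝ,
      HasDerivAt (fun ε : ℝ => pulledBackCurvature (fun _ => 0) ε α)
        (Real.cos α) 0) := by
  refine ⟨fun δθ _ _ α => ?_, fun α => ?_⟩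
  · simp only [pulledBackCurvature_const_mul_zero]
    exact hasDerivAt_polarCurvature_line _ _ _
  · simp only [pulledBackCurvature_zero]
    exact (hasDerivAt_mul_div_one_add_mul _).const_add 1
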